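/- (Lemma 4, small-gain bound.) In the setting of Theorem 1 (nominal SLS responses Φ = [Φ_x; Φ_u], model error Δℳ with ‖ΔA‖ ≤ e_A, ‖ΔB‖ ≤ e_B, data (x^i, u^i) with true disturbances w^i and nominal disturbances ŵ^i all having first n coordinates equal to x₀, true disturbance distribution P_w with finite first moment supported on {w : first n coordinates equal x₀}), assume additionally that d_W(P̄_w, P_w) ≤ κ for some κ > 0 and that max(e_A, e_B)·‖ΦZ‖ < γ for some γ ∈ [0, 1). Then the Wasserstein distance between the empirical predictive distribution P̂_pred = (1/N)Σ_i δ_{Φŵ^i} and the true closed-loop distribution P_cl = ((I + ΦZΔℳ)⁻¹Φ)#P_w satisfies d_W(P̂_pred, P_cl) ≤ (γ/(1 − γ)) · (1/N)Σ_{i=1}^N ‖Φŵ^i − [x^i; u^i]‖ + (κ/(1 − γ)) · ‖ΦZ‖. -/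

import Mathlib

open MeasureTheory Matrix
open scoped ENNReal

/-!
Write `H = ΦZΔℳ` and `G = (I + H)⁻¹Φ`. Since `‖H‖ ≤ max(e_A, e_B)‖ΦZ‖ < γ < 1`, the matrix
`I + H` is invertible and `(1 - γ)‖y‖ ≤ ‖(I + H)y‖`. With `zⁱ = [xⁱ; uⁱ]` one has
`ŵⁱ = wⁱ - ZΔℳzⁱ`, hence `(I + H)(Φŵⁱ - Gv) = Φ(wⁱ - v) + H(Φŵⁱ - zⁱ)`. For `P_w`-almost
every `v` the first block of `wⁱ - v` vanishes, so `wⁱ - v = Zv'` with `‖v'‖ ≤ ‖wⁱ - v‖` and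
`‖Φŵⁱ - Gv‖ ≤ (γ‖Φŵⁱ - zⁱ‖ + ‖ΦZ‖‖wⁱ - v‖)/(1 - γ)`. Transporting any coupling of `P̄_w` and
`P_w` along `(wⁱ, v) ↦ (Φŵⁱ, Gv)` gives a coupling of `P̂_pred` and `P_cl`; integrating the
pointwise bound against it and taking the infimum over couplings gives the claim.
-/

/-- The ℓ¹-norm of a vector. -/
noncomputable def l1norm {ι : Type*} [Fintype ι] (v : ι → ℝ) : ℝ := ∑ i, |v i|

/-- The induced ℓ¹-norm of a matrix (maximum absolute column sum). -/
noncomputable def matL1 {ι κ : Type*} [Fintype ι] [Fintype κ] (M : Matrix ι κ ℝ) : ℝ :=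
  ⨆ j, ∑ i, |M i j|

/-- The Wasserstein-1 distance (w.r.t. the ℓ¹-norm): infimum over couplings of the expected
ℓ¹-distance. -/
noncomputable def wass {ι : Type*} [Fintype ι] (P Q : Measure (ι → ℝ)) : ℝ :=
  sInf { r | ∃ π : Measure ((ι → ℝ) × (ι → ℝ)),
    IsProbabilityMeasure π ∧ π.map Prod.fst = P ∧ π.map Prod.snd = Q ∧
    r = ∫ p, l1norm (p.1 - p.2) ∂π }

/-- The uniform empirical measure `(1/N) ∑ᵢ δ_{a i}`. -/
noncomputable def emp {ι : Type*} [Fintype ι] {N : ℕ} (a : Fin N → (ι → ℝ)) :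
    Measure (ι → ℝ) :=
  (N : ℝ≥0∞)⁻¹ • ∑ i, Measure.dirac (a i)

/-- The block-downshift matrix `Z`, with `n × n` identity blocks on the first block
subdiagonal and zero blocks elsewhere. -/
noncomputable def dshift (T n : ℕ) : Matrix (Fin (T+1) × Fin n) (Fin (T+1) × Fin n) ℝ :=
  fun p q => if (p.1 : ℕ) = (q.1 : ℕ) + 1 ∧ p.2 = q.2 then 1 else 0

/-- `blkdiag T M`: block-diagonal matrix with `T+1` copies of `M` on the diagonal. -/
noncomputable def blkdiag (T : ℕ) {n m : ℕ} (M : Matrix (Fin n) (Fin m) ℝ) :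
    Matrix (Fin (T+1) × Fin n) (Fin (T+1) × Fin m) ℝ :=
  fun p q => if p.1 = q.1 then M p.2 q.2 else 0

/-- A block-partitioned matrix is block lower triangular: all blocks strictly above the
block diagonal are zero. -/
def BlockLT {T n m : ℕ} (M : Matrix (Fin (T+1) × Fin m) (Fin (T+1) × Fin n) ℝ) : Prop :=
  ∀ p q, p.1 < q.1 → M p q = 0

section Norms

variable {ι κ τ : Type*} [Fintype ι] [Fintype κ] [Fintype τ]

lemma l1norm_nonneg (v : ι → ℝ) : 0 ≤ l1norm v :=
  Finset.sum_nonneg fun _ _ => abs_nonneg _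

lemma l1norm_pos {v : ι → ℝ} (hv : v ≠ 0) : 0 < l1norm v := by
  obtain ⟨i, hi⟩ := Function.ne_iff.mp hv
  exact (abs_pos.mpr hi).trans_le
    (Finset.single_le_sum (fun j _ => abs_nonneg (v j)) (Finset.mem_univ i))

lemma l1norm_add_le (a b : ι → ℝ) : l1norm (a + b) ≤ l1norm a + l1norm b := by
  rw [l1norm, l1norm, l1norm, ← Finset.sum_add_distrib]
  exact Finset.sum_le_sum fun i _ => abs_add_le (a i) (b i)

lemma l1norm_sub_le (a b : ι → ℝ) : l1norm (a - b) ≤ l1norm a + l1norm b := by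
  rw [l1norm, l1norm, l1norm, ← Finset.sum_add_distrib]
  exact Finset.sum_le_sum fun i _ => abs_sub (a i) (b i)

lemma continuous_l1norm : Continuous (l1norm : (ι → ℝ) → ℝ) :=
  continuous_finsetSum _ fun i _ => (continuous_apply i).abs

lemma continuous_l1norm_sub : Continuous fun p : (ι → ℝ) × (ι → ℝ) => l1norm (p.1 - p.2) :=
  continuous_l1norm.comp (continuous_fst.sub continuous_snd)

lemma sum_abs_le_matL1 (M : Matrix ι κ ℝ) (j : κ) : ∑ i, |M i j| ≤ matL1 M :=
  le_ciSup (f := fun j => ∑ i, |M i j|) (Set.finite_range _).bddAbove j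

lemma matL1_nonneg (M : Matrix ι κ ℝ) : 0 ≤ matL1 M :=
  Real.iSup_nonneg fun _ => Finset.sum_nonneg fun _ _ => abs_nonneg _

lemma matL1_le {M : Matrix ι κ ℝ} {c : ℝ} (hc : 0 ≤ c) (h : ∀ j, ∑ i, |M i j| ≤ c) :
    matL1 M ≤ c :=
  Real.iSup_le h hc

lemma l1norm_mulVec_le (M : Matrix ι κ ℝ) (v : κ → ℝ) :
    l1norm (M *ᵥ v) ≤ matL1 M * l1norm v :=
  calc l1norm (M *ᵥ v) ≤ ∑ i, ∑ j, |M i j| * |v j| :=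
        Finset.sum_le_sum fun i _ => (Finset.abs_sum_le_sum_abs _ _).trans_eq
          (Finset.sum_congr rfl fun j _ => abs_mul _ _)
    _ = ∑ j, (∑ i, |M i j|) * |v j| := by rw [Finset.sum_comm]; simp_rw [Finset.sum_mul]
    _ ≤ ∑ j, matL1 M * |v j| :=
        Finset.sum_le_sum fun j _ =>
          mul_le_mul_of_nonneg_right (sum_abs_le_matL1 M j) (abs_nonneg _)
    _ = matL1 M * l1norm v := (Finset.mul_sum _ _ _).symm

lemma matL1_mul_le (M : Matrix ι κ ℝ) (P : Matrix κ τ ℝ) :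
    matL1 (M * P) ≤ matL1 M * matL1 P := by
  refine matL1_le (mul_nonneg (matL1_nonneg M) (matL1_nonneg P)) fun j => ?_
  calc ∑ i, |(M * P) i j| = l1norm (M *ᵥ fun k => P k j) := rfl
    _ ≤ matL1 M * l1norm (fun k => P k j) := l1norm_mulVec_le _ _
    _ ≤ matL1 M * matL1 P := mul_le_mul_of_nonneg_left (sum_abs_le_matL1 P j) (matL1_nonneg M)

lemma matL1_fromCols_le (M : Matrix ι κ ℝ) (P : Matrix ι τ ℝ) :
    matL1 (fromCols M P) ≤ max (matL1 M) (matL1 P) := by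
  refine matL1_le ((matL1_nonneg M).trans (le_max_left _ _)) ?_
  rintro (j | j)
  · exact (sum_abs_le_matL1 M j).trans (le_max_left _ _)
  · exact (sum_abs_le_matL1 P j).trans (le_max_right _ _)

end Norms

lemma matL1_blkdiag_le (T : ℕ) {n m : ℕ} (M : Matrix (Fin n) (Fin m) ℝ) :
    matL1 (blkdiag T M) ≤ matL1 M := by
  refine matL1_le (matL1_nonneg M) fun q => ?_
  calc ∑ p : Fin (T+1) × Fin n, |blkdiag T M p q| = ∑ i, |M i q.2| := by
        rw [Fintype.sum_prod_type, Finset.sum_eq_single q.1 (fun t _ ht => by simp [blkdiag, ht])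
          (by simp)]
        simp [blkdiag]
    _ ≤ matL1 M := sum_abs_le_matL1 M q.2

lemma matL1_mul_fromCols_blkdiag_le {κ : Type*} [Fintype κ] (T : ℕ) {n m : ℕ}
    (M : Matrix κ (Fin (T+1) × Fin n) ℝ) (A : Matrix (Fin n) (Fin n) ℝ)
    (B : Matrix (Fin n) (Fin m) ℝ) :
    matL1 (M * fromCols (blkdiag T A) (blkdiag T B)) ≤ max (matL1 A) (matL1 B) * matL1 M := by
  rw [mul_comm (max _ _)]
  refine (matL1_mul_le _ _).trans (mul_le_mul_of_nonneg_left ?_ (matL1_nonneg M))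
  exact (matL1_fromCols_le _ _).trans (max_le_max (matL1_blkdiag_le T A) (matL1_blkdiag_le T B))

section SmallGain

variable {ι : Type*} [Fintype ι] [DecidableEq ι] {H : Matrix ι ι ℝ} {γ : ℝ}

lemma one_sub_mul_l1norm_le (hH : matL1 H ≤ γ) (y : ι → ℝ) :
    (1 - γ) * l1norm y ≤ l1norm ((1 + H) *ᵥ y) := by
  have hy : y = (1 + H) *ᵥ y - H *ᵥ y := by rw [add_mulVec, one_mulVec, add_sub_cancel_right]
  have h1 : l1norm y ≤ l1norm ((1 + H) *ᵥ y) + l1norm (H *ᵥ y) := by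
    conv_lhs => rw [hy]
    exact l1norm_sub_le _ _
  have h2 : l1norm (H *ᵥ y) ≤ γ * l1norm y :=
    (l1norm_mulVec_le H y).trans (mul_le_mul_of_nonneg_right hH (l1norm_nonneg y))
  linarith

lemma isUnit_det_one_add_of_matL1_lt_one (hH : matL1 H < 1) : IsUnit (1 + H).det := by
  refine isUnit_iff_ne_zero.mpr fun hdet => ?_
  obtain ⟨v, hv, hHv⟩ := exists_mulVec_eq_zero_iff.mpr hdet
  have h := one_sub_mul_l1norm_le (le_refl (matL1 H)) v
  rw [hHv, show l1norm (0 : ι → ℝ) = 0 by simp [l1norm]] at h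
  nlinarith [l1norm_pos hv]

end SmallGain

section Shift

variable {T n : ℕ}

lemma dshift_mulVec_apply (v : Fin (T+1) × Fin n → ℝ) (p : Fin (T+1) × Fin n) :
    (dshift T n *ᵥ v) p = ∑ t : Fin (T+1), if (p.1 : ℕ) = t + 1 then v (t, p.2) else 0 := by
  simp [mulVec, dotProduct, dshift, Fintype.sum_prod_type, ite_and]

lemma exists_dshift_mulVec_eq {v : Fin (T+1) × Fin n → ℝ} (h0 : ∀ j, v (0, j) = 0) :
    ∃ v', dshift T n *ᵥ v' = v ∧ l1norm v' ≤ l1norm v := by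
  refine ⟨fun q => Fin.lastCases (motive := fun _ => ℝ) 0 (fun s => v (s.succ, q.2)) q.1, ?_, ?_⟩
  · ext ⟨t, j⟩
    rw [dshift_mulVec_apply]
    cases t using Fin.cases with
    | zero => simp [h0]
    | succ s =>
      rw [Fin.sum_univ_castSucc]
      simp [Fin.val_inj]
  · rw [l1norm, l1norm, Fintype.sum_prod_type, Fintype.sum_prod_type, Fin.sum_univ_castSucc,
      Fin.sum_univ_succ]
    simp only [Fin.lastCases_castSucc, Fin.lastCases_last, abs_zero, Finset.sum_const_zero,
      add_zero]
    exact le_add_of_nonneg_left (Finset.sum_nonneg fun _ _ => abs_nonneg _)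

lemma l1norm_mulVec_le_matL1_mul_dshift {κ : Type*} [Fintype κ]
    (M : Matrix κ (Fin (T+1) × Fin n) ℝ) {v : Fin (T+1) × Fin n → ℝ} (h0 : ∀ j, v (0, j) = 0) :
    l1norm (M *ᵥ v) ≤ matL1 (M * dshift T n) * l1norm v := by
  obtain ⟨v', rfl, hv'⟩ := exists_dshift_mulVec_eq h0
  rw [mulVec_mulVec]
  exact (l1norm_mulVec_le _ _).trans (mul_le_mul_of_nonneg_left hv' (matL1_nonneg _))

end Shift

section ClosedLoop

variable {ι κ : Type*} [Fintype ι] [Fintype κ] [DecidableEq κ]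
  {Φ G : Matrix κ ι ℝ} {K : Matrix ι κ ℝ}

lemma one_add_mul_mulVec_sub (hG : (1 + Φ * K) * G = Φ) (w v : ι → ℝ) (z : κ → ℝ) :
    (1 + Φ * K) *ᵥ (Φ *ᵥ (w - K *ᵥ z) - G *ᵥ v)
      = Φ *ᵥ (w - v) + (Φ * K) *ᵥ (Φ *ᵥ (w - K *ᵥ z) - z) := by
  rw [mulVec_sub, mulVec_mulVec v, hG, add_mulVec, one_mulVec]
  simp only [mulVec_sub, ← mulVec_mulVec]
  abel

lemma l1norm_sub_mulVec_le_of_matL1_le {γ c : ℝ} (hG : (1 + Φ * K) * G = Φ)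
    (hH : matL1 (Φ * K) ≤ γ) (hγ : γ < 1) {w v : ι → ℝ}
    (hΦ : l1norm (Φ *ᵥ (w - v)) ≤ c * l1norm (w - v)) (z : κ → ℝ) :
    l1norm (Φ *ᵥ (w - K *ᵥ z) - G *ᵥ v)
      ≤ γ / (1 - γ) * l1norm (Φ *ᵥ (w - K *ᵥ z) - z) + c / (1 - γ) * l1norm (w - v) := by
  have h1 := one_sub_mul_l1norm_le hH (Φ *ᵥ (w - K *ᵥ z) - G *ᵥ v)
  rw [one_add_mul_mulVec_sub hG] at h1
  have h2 := (l1norm_add_le _ _).trans (add_le_add hΦ ((l1norm_mulVec_le (Φ * K)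
    (Φ *ᵥ (w - K *ᵥ z) - z)).trans (mul_le_mul_of_nonneg_right hH (l1norm_nonneg _))))
  rw [div_mul_eq_mul_div, div_mul_eq_mul_div, ← add_div, le_div_iff₀ (sub_pos.mpr hγ)]
  linarith

end ClosedLoop

lemma sub_mul_mulVec_sub_mul_mulVec_eq {ι ι' μ : Type*} [Fintype ι] [Fintype ι'] [Fintype μ]
    (Z : Matrix ι ι' ℝ) (A A' : Matrix ι' ι ℝ) (B B' : Matrix ι' μ ℝ) (x : ι → ℝ) (u : μ → ℝ) :
    x - (Z * A') *ᵥ x - (Z * B') *ᵥ u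
      = x - (Z * A) *ᵥ x - (Z * B) *ᵥ u - (Z * fromCols (A' - A) (B' - B)) *ᵥ Sum.elim x u := by
  rw [← mulVec_mulVec (Sum.elim x u) Z, fromCols_mulVec_sumElim]
  simp only [sub_mulVec, mulVec_add, mulVec_sub, mulVec_mulVec]
  abel

lemma blkdiag_sub (T : ℕ) {n m : ℕ} (M P : Matrix (Fin n) (Fin m) ℝ) :
    blkdiag T (M - P) = blkdiag T M - blkdiag T P := by
  ext p q
  by_cases h : p.1 = q.1 <;> simp [blkdiag, h]

section Coupling

variable {ι κ : Type*} [Fintype ι] [Fintype κ]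

lemma wass_le_integral {P Q : Measure (ι → ℝ)} {π : Measure ((ι → ℝ) × (ι → ℝ))}
    [IsProbabilityMeasure π] (hfst : π.map Prod.fst = P) (hsnd : π.map Prod.snd = Q) :
    wass P Q ≤ ∫ p, l1norm (p.1 - p.2) ∂π := by
  refine csInf_le ⟨0, ?_⟩ ⟨π, inferInstance, hfst, hsnd, rfl⟩
  rintro r ⟨π', -, -, -, rfl⟩
  exact integral_nonneg fun p => l1norm_nonneg _

lemma le_add_mul_wass {P Q : Measure (ι → ℝ)} [IsProbabilityMeasure P] [IsProbabilityMeasure Q]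
    {b A C : ℝ} (hC : 0 ≤ C)
    (h : ∀ π : Measure ((ι → ℝ) × (ι → ℝ)), IsProbabilityMeasure π → π.map Prod.fst = P →
      π.map Prod.snd = Q → b ≤ A + C * ∫ p, l1norm (p.1 - p.2) ∂π) :
    b ≤ A + C * wass P Q := by
  have hprod : (P.prod Q).map Prod.fst = P ∧ (P.prod Q).map Prod.snd = Q := by simp
  rcases hC.eq_or_lt with rfl | hC
  · simpa using h _ inferInstance hprod.1 hprod.2
  rw [← sub_le_iff_le_add', ← div_le_iff₀' hC]
  refine le_csInf ⟨_, _, inferInstance, hprod.1, hprod.2, rfl⟩ ?_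
  rintro r ⟨π, hπ, hfst, hsnd, rfl⟩
  rw [div_le_iff₀' hC, sub_le_iff_le_add']
  exact h π hπ hfst hsnd

lemma integrable_l1norm_sub {π : Measure ((ι → ℝ) × (ι → ℝ))}
    (hfst : Integrable l1norm (π.map Prod.fst)) (hsnd : Integrable l1norm (π.map Prod.snd)) :
    Integrable (fun p => l1norm (p.1 - p.2)) π := by
  have h1 := (integrable_map_measure continuous_l1norm.aestronglyMeasurable
    measurable_fst.aemeasurable).mp hfst
  have h2 := (integrable_map_measure continuous_l1norm.aestronglyMeasurable
    measurable_snd.aemeasurable).mp hsnd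
  refine (h1.add h2).mono' continuous_l1norm_sub.aestronglyMeasurable (ae_of_all _ fun p => ?_)
  rw [Real.norm_of_nonneg (l1norm_nonneg _)]
  exact l1norm_sub_le _ _

end Coupling

section Lift

open ProbabilityTheory

variable {α β γ : Type*} [MeasurableSpace α] [MeasurableSpace β] [MeasurableSpace γ]

lemma map_prodMap_compProd_comap (μ : Measure α) [SFinite μ] {f : α → β} (hf : Measurable f)
    (η : Kernel β γ) [IsSFiniteKernel η] :
    (μ ⊗ₘ η.comap f hf).map (Prod.map f id) = μ.map f ⊗ₘ η := by
  ext s hs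
  rw [Measure.map_apply (hf.prodMap measurable_id) hs,
    Measure.compProd_apply ((hf.prodMap measurable_id) hs), Measure.compProd_apply hs,
    lintegral_map (Kernel.measurable_kernel_prodMk_left hs) hf]
  rfl

lemma exists_map_fst_eq_map_prodMap_eq [StandardBorelSpace γ] [Nonempty γ] (μ : Measure α)
    [SFinite μ] {f : α → β} (hf : Measurable f) (π : Measure (β × γ)) [IsFiniteMeasure π]
    (hπ : π.map Prod.fst = μ.map f) :
    ∃ ρ : Measure (α × γ), ρ.map Prod.fst = μ ∧ ρ.map (Prod.map f id) = π :=
  ⟨μ ⊗ₘ π.condKernel.comap f hf, Measure.fst_compProd _ _, by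
    rw [map_prodMap_compProd_comap, ← hπ]
    exact π.disintegrate π.condKernel⟩

end Lift

noncomputable def unifFin (N : ℕ) : Measure (Fin N) := (N : ℝ≥0∞)⁻¹ • ∑ i, Measure.dirac i

instance {N : ℕ} [NeZero N] : IsProbabilityMeasure (unifFin N) :=
  ⟨by simpa [unifFin] using
    ENNReal.inv_mul_cancel (NeZero.ne (N : ℝ≥0∞)) (ENNReal.natCast_ne_top N)⟩

lemma emp_eq_map_unifFin {ι : Type*} [Fintype ι] {N : ℕ} (y : Fin N → ι → ℝ) :
    emp y = (unifFin N).map y := by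
  rw [emp, unifFin, Measure.map_smul, Measure.map_finset_sum' Measurable.of_discrete.aemeasurable]
  simp_rw [Measure.map_dirac' Measurable.of_discrete]

lemma integral_unifFin {N : ℕ} (a : Fin N → ℝ) : ∫ i, a i ∂unifFin N = (N : ℝ)⁻¹ * ∑ i, a i := by
  rw [unifFin, integral_smul_measure, integral_finsetSum_measure fun _ _ => Integrable.of_finite]
  simp [Finset.mul_sum]

section Transport

variable {ι κ : Type*} {N : ℕ} [NeZero N]

instance [Fintype ι] (y : Fin N → ι → ℝ) : IsProbabilityMeasure (emp y) := by
  rw [emp_eq_map_unifFin]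
  exact Measure.isProbabilityMeasure_map Measurable.of_discrete.aemeasurable

lemma integrable_l1norm_emp [Fintype ι] (y : Fin N → ι → ℝ) : Integrable l1norm (emp y) := by
  rw [emp_eq_map_unifFin, integrable_map_measure continuous_l1norm.aestronglyMeasurable
    Measurable.of_discrete.aemeasurable]
  exact Integrable.of_finite

lemma wass_emp_map_le_integral [Fintype κ] {P : Measure (ι → ℝ)} {ρ : Measure (Fin N × (ι → ℝ))}
    (hρfst : ρ.map Prod.fst = unifFin N) (hρsnd : ρ.map Prod.snd = P) (y : Fin N → κ → ℝ)
    {G : (ι → ℝ) → κ → ℝ} (hG : Measurable G) :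
    wass (emp y) (P.map G) ≤ ∫ q, l1norm (y q.1 - G q.2) ∂ρ := by
  have : IsProbabilityMeasure ρ := by
    have : IsProbabilityMeasure (ρ.map Prod.fst) := hρfst ▸ inferInstance
    exact Measure.isProbabilityMeasure_of_map Prod.fst
  have hmy : Measurable (Prod.map y G) := Measurable.of_discrete.prodMap hG
  have := Measure.isProbabilityMeasure_map (μ := ρ) hmy.aemeasurable
  refine (wass_le_integral ?_ ?_).trans_eq
    (integral_map hmy.aemeasurable continuous_l1norm_sub.aestronglyMeasurable)
  · rw [Measure.map_map measurable_fst hmy, emp_eq_map_unifFin, ← hρfst,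
      Measure.map_map Measurable.of_discrete measurable_fst]
    rfl
  · rw [Measure.map_map measurable_snd hmy, ← hρsnd, Measure.map_map hG measurable_snd]
    rfl

/-- The coupling of `emp w` and `P` is lifted to `Fin N × (ι → ℝ)` rather than pushed forward
directly, because the points `w i` may repeat while the `y i` differ. -/
theorem wass_emp_map_le [Fintype ι] [Fintype κ] {P : Measure (ι → ℝ)} [IsProbabilityMeasure P]
    (hP : Integrable l1norm P) (w : Fin N → ι → ℝ) (y : Fin N → κ → ℝ)
    {G : (ι → ℝ) → κ → ℝ} (hG : Measurable G) (a : Fin N → ℝ) {C : ℝ} (hC : 0 ≤ C)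
    (h : ∀ᵐ v ∂P, ∀ i, l1norm (y i - G v) ≤ a i + C * l1norm (w i - v)) :
    wass (emp y) (P.map G) ≤ (N : ℝ)⁻¹ * ∑ i, a i + C * wass (emp w) P := by
  have := Measure.isProbabilityMeasure_map (μ := P) hG.aemeasurable
  refine le_add_mul_wass hC fun π hπ hfst hsnd => ?_
  obtain ⟨ρ, hρfst, hρπ⟩ := exists_map_fst_eq_map_prodMap_eq (unifFin N) Measurable.of_discrete π
    (hfst.trans (emp_eq_map_unifFin w))
  have hmw : Measurable (Prod.map w id : Fin N × (ι → ℝ) → _) :=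
    Measurable.of_discrete.prodMap measurable_id
  have hρsnd : ρ.map Prod.snd = P := by
    rw [← hsnd, ← hρπ, Measure.map_map measurable_snd hmw]
    rfl
  have ha : Integrable (fun q => a q.1) ρ :=
    (hρfst.symm ▸ (Integrable.of_finite : Integrable a (unifFin N)) :
      Integrable a (ρ.map Prod.fst)).comp_measurable measurable_fst
  have hw : Integrable (fun q => l1norm (w q.1 - q.2)) ρ :=
    (hρπ ▸ integrable_l1norm_sub (hfst ▸ integrable_l1norm_emp w) (hsnd ▸ hP)).comp_measurable hmw
  calc wass (emp y) (P.map G) ≤ ∫ q, l1norm (y q.1 - G q.2) ∂ρ :=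
        wass_emp_map_le_integral hρfst hρsnd y hG
    _ ≤ ∫ q, (a q.1 + C * l1norm (w q.1 - q.2)) ∂ρ := by
        refine integral_mono_of_nonneg (ae_of_all _ fun _ => l1norm_nonneg _)
          (ha.add (hw.const_mul C)) ?_
        filter_upwards [ae_of_ae_map measurable_snd.aemeasurable (hρsnd ▸ h)] with q hq
        exact hq q.1
    _ = (N : ℝ)⁻¹ * ∑ i, a i + C * ∫ p, l1norm (p.1 - p.2) ∂π := by
        rw [integral_add ha (hw.const_mul C), integral_const_mul, ← integral_unifFin, ← hρfst,
          ← hρπ, integral_map measurable_fst.aemeasurable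
            Measurable.of_discrete.aestronglyMeasurable,
          integral_map hmw.aemeasurable continuous_l1norm_sub.aestronglyMeasurable]
        rfl

end Transport

theorem stmt12_general {n m T N : ℕ} (hN : 0 < N)
    (Ahat A : Matrix (Fin n) (Fin n) ℝ) (Bhat B : Matrix (Fin n) (Fin m) ℝ)
    (eA eB : ℝ) (heA : matL1 (Ahat - A) ≤ eA) (heB : matL1 (Bhat - B) ≤ eB)
    (Φ : Matrix ((Fin (T+1) × Fin n) ⊕ (Fin (T+1) × Fin m)) (Fin (T+1) × Fin n) ℝ)
    (ΔM : Matrix (Fin (T+1) × Fin n) ((Fin (T+1) × Fin n) ⊕ (Fin (T+1) × Fin m)) ℝ)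
    (hΔM : ΔM = Matrix.fromCols (blkdiag T (Ahat - A)) (blkdiag T (Bhat - B)))
    (x0 : Fin n → ℝ)
    (Pw : Measure ((Fin (T+1) × Fin n) → ℝ)) [IsProbabilityMeasure Pw]
    (hPwmom : Integrable (fun v => l1norm v) Pw)
    (hPwsupp : ∀ᵐ v ∂Pw, ∀ j, v (0, j) = x0 j)
    (x : Fin N → (Fin (T+1) × Fin n) → ℝ) (u : Fin N → (Fin (T+1) × Fin m) → ℝ)
    (w what : Fin N → (Fin (T+1) × Fin n) → ℝ)
    (hw : ∀ i, w i = x i - (dshift T n * blkdiag T A) *ᵥ x i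
        - (dshift T n * blkdiag T B) *ᵥ u i)
    (hwhat : ∀ i, what i = x i - (dshift T n * blkdiag T Ahat) *ᵥ x i
        - (dshift T n * blkdiag T Bhat) *ᵥ u i)
    (hw0 : ∀ i j, w i (0, j) = x0 j)
    (κ γ : ℝ) (hwass : wass (emp w) Pw ≤ κ)
    (hγ1 : γ < 1)
    (hsg : max eA eB * matL1 (Φ * dshift T n) < γ) :
    wass (emp (fun i => Φ *ᵥ what i))
        (Pw.map (fun v => ((1 + Φ * dshift T n * ΔM)⁻¹ * Φ) *ᵥ v))
      ≤ γ / (1 - γ) * ((N : ℝ)⁻¹ * ∑ i, l1norm (Φ *ᵥ what i - Sum.elim (x i) (u i)))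
        + κ / (1 - γ) * matL1 (Φ * dshift T n) := by
  have : NeZero N := ⟨hN.ne'⟩
  rw [Matrix.mul_assoc Φ]
  have hC : 0 ≤ matL1 (Φ * dshift T n) / (1 - γ) :=
    div_nonneg (matL1_nonneg _) (sub_pos.mpr hγ1).le
  have hH : matL1 (Φ * (dshift T n * ΔM)) < γ := by
    rw [← Matrix.mul_assoc, hΔM]
    refine (matL1_mul_fromCols_blkdiag_le T _ _ _).trans_lt (lt_of_le_of_lt ?_ hsg)
    exact mul_le_mul_of_nonneg_right (max_le_max heA heB) (matL1_nonneg _)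
  have hG : (1 + Φ * (dshift T n * ΔM)) * ((1 + Φ * (dshift T n * ΔM))⁻¹ * Φ) = Φ := by
    rw [← Matrix.mul_assoc, mul_nonsing_inv _ (isUnit_det_one_add_of_matL1_lt_one (hH.trans hγ1)),
      Matrix.one_mul]
  have hbound : ∀ᵐ v ∂Pw, ∀ i, l1norm (Φ *ᵥ what i - ((1 + Φ * (dshift T n * ΔM))⁻¹ * Φ) *ᵥ v)
      ≤ γ / (1 - γ) * l1norm (Φ *ᵥ what i - Sum.elim (x i) (u i))
        + matL1 (Φ * dshift T n) / (1 - γ) * l1norm (w i - v) := by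
    filter_upwards [hPwsupp] with v hv i
    have h0 : ∀ j, (w i - v) (0, j) = 0 := fun j => by simp [hw0, hv]
    rw [hwhat, sub_mul_mulVec_sub_mul_mulVec_eq _ (blkdiag T A) _ (blkdiag T B), ← hw,
      ← blkdiag_sub, ← blkdiag_sub, ← hΔM]
    exact l1norm_sub_mulVec_le_of_matL1_le hG hH.le hγ1 (l1norm_mulVec_le_matL1_mul_dshift Φ h0) _
  calc _ ≤ (N : ℝ)⁻¹ * ∑ i, γ / (1 - γ) * l1norm (Φ *ᵥ what i - Sum.elim (x i) (u i))
        + matL1 (Φ * dshift T n) / (1 - γ) * wass (emp w) Pw :=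
        wass_emp_map_le hPwmom w _ (by fun_prop) _ hC hbound
    _ ≤ (N : ℝ)⁻¹ * ∑ i, γ / (1 - γ) * l1norm (Φ *ᵥ what i - Sum.elim (x i) (u i))
        + matL1 (Φ * dshift T n) / (1 - γ) * κ := by gcongr
    _ = _ := by rw [← Finset.mul_sum]; ring

/-- **Lemma 4, small-gain bound.** Under the small-gain condition
`max(e_A, e_B)‖ΦZ‖ < γ < 1` and `d_W(P̄_w, P_w) ≤ κ`, the distribution shift satisfies
`d_W(P̂_pred, P_cl) ≤ (γ/(1−γ))(1/N)Σᵢ‖Φŵⁱ − [xⁱ; uⁱ]‖ + (κ/(1−γ))‖ΦZ‖`. -/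
theorem stmt12 {n m T N : ℕ} (hn : 0 < n) (hm : 0 < m) (hT : 0 < T) (hN : 0 < N)
    (Ahat A : Matrix (Fin n) (Fin n) ℝ) (Bhat B : Matrix (Fin n) (Fin m) ℝ)
    (eA eB : ℝ) (heA : matL1 (Ahat - A) ≤ eA) (heB : matL1 (Bhat - B) ≤ eB)
    (Φx : Matrix (Fin (T+1) × Fin n) (Fin (T+1) × Fin n) ℝ)
    (Φu : Matrix (Fin (T+1) × Fin m) (Fin (T+1) × Fin n) ℝ)
    (hx : BlockLT Φx) (hu : BlockLT Φu)
    (hSLS : (1 - dshift T n * blkdiag T Ahat) * Φx - dshift T n * blkdiag T Bhat * Φu = 1)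
    (Φ : Matrix ((Fin (T+1) × Fin n) ⊕ (Fin (T+1) × Fin m)) (Fin (T+1) × Fin n) ℝ)
    (hΦ : Φ = Matrix.fromRows Φx Φu)
    (ΔM : Matrix (Fin (T+1) × Fin n) ((Fin (T+1) × Fin n) ⊕ (Fin (T+1) × Fin m)) ℝ)
    (hΔM : ΔM = Matrix.fromCols (blkdiag T (Ahat - A)) (blkdiag T (Bhat - B)))
    (x0 : Fin n → ℝ)
    (Pw : Measure ((Fin (T+1) × Fin n) → ℝ)) [IsProbabilityMeasure Pw]
    (hPwmom : Integrable (fun v => l1norm v) Pw)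
    (hPwsupp : ∀ᵐ v ∂Pw, ∀ j, v (0, j) = x0 j)
    (x : Fin N → (Fin (T+1) × Fin n) → ℝ) (u : Fin N → (Fin (T+1) × Fin m) → ℝ)
    (w what : Fin N → (Fin (T+1) × Fin n) → ℝ)
    (hw : ∀ i, w i = x i - (dshift T n * blkdiag T A) *ᵥ x i
        - (dshift T n * blkdiag T B) *ᵥ u i)
    (hwhat : ∀ i, what i = x i - (dshift T n * blkdiag T Ahat) *ᵥ x i
        - (dshift T n * blkdiag T Bhat) *ᵥ u i)
    (hw0 : ∀ i j, w i (0, j) = x0 j) (hwhat0 : ∀ i j, what i (0, j) = x0 j)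
    (κ γ : ℝ) (hκ : 0 < κ) (hwass : wass (emp w) Pw ≤ κ)
    (hγ0 : 0 ≤ γ) (hγ1 : γ < 1)
    (hsg : max eA eB * matL1 (Φ * dshift T n) < γ) :
    wass (emp (fun i => Φ *ᵥ what i))
        (Pw.map (fun v => ((1 + Φ * dshift T n * ΔM)⁻¹ * Φ) *ᵥ v))
      ≤ γ / (1 - γ) * ((N : ℝ)⁻¹ * ∑ i, l1norm (Φ *ᵥ what i - Sum.elim (x i) (u i)))
        + κ / (1 - γ) * matL1 (Φ * dshift T n) :=
  stmt12_general hN Ahat A Bhat B eA eB heA heB Φ ΔM hΔM x0 Pw hPwmom hPwsupp x u w what hw hwhat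
    hw0 κ γ hwass hγ1 hsg
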